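/- Every sequence of expansions producing a partial cube H from the one-vertex graph K_1 has the same length, namely the number of Θ-classes of H (equivalently, the number of equivalence classes of the Djoković–Winkler relation on the edges of H). -/

import Mathlib

/-!
Every graph obtained from `K₁` by `n` expansions has an isometric embedding into `Q_n` in which
each of the `n` coordinates is flipped by some edge. Indeed, an isometric embedding of `G` into
`Q_d` extends to the expansion of `G` along `G₁, G₂` by a new coordinate recording whether a
vertex lies in the copy of `G₁` or of `G₂`: distances in the expansion are those of `G`, plus one
between the two copies, and the new coordinate is flipped exactly by the matching edges.

In any isometric embedding into a hypercube each edge flips exactly one coordinate, and the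
four-point sums of Hamming distances differ only in that coordinate, so two edges are `Θ`-related
iff they flip the same coordinate. Hence the `Θ`-classes correspond to the coordinates flipped by
some edge, and there are `n` of them.
-/

open SimpleGraph

/-- The hypercube graph `Q_d` on `{0,1}^d`: two vertices are adjacent iff they
differ in exactly one coordinate. -/
def hypercubeGraph (d : ℕ) : SimpleGraph (Fin d → Bool) where
  Adj x y := hammingDist x y = 1
  symm := by
    constructor
    intro x y h
    rwa [hammingDist_comm]
  loopless := by
    constructor
    intro x h
    simp [hammingDist_self] at h

/-- A partial cube: a connected simple graph admitting an isometric embedding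
into some hypercube. -/
def IsPartialCube {V : Type} (G : SimpleGraph V) : Prop :=
  G.Connected ∧
    ∃ (d : ℕ) (φ : V → (Fin d → Bool)), Function.Injective φ ∧
      ∀ v w : V, (hypercubeGraph d).dist (φ v) (φ w) = G.dist v w

/-- A subgraph is isometric if distances within it coincide with distances in
the ambient graph. -/
def IsIsometricSubgraph {V : Type} {G : SimpleGraph V} (G' : G.Subgraph) : Prop :=
  ∀ u v : G'.verts, G'.coe.dist u v = G.dist u.val v.val

/-- The expansion graph of `G` with respect to two subgraphs `G₁, G₂`: take
disjoint copies of `G₁` and `G₂` and join the two copies of each vertex of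
`G₁ ∩ G₂` by a matching edge. -/
def expansionGraph {V : Type} {G : SimpleGraph V} (G₁ G₂ : G.Subgraph) :
    SimpleGraph (↥G₁.verts ⊕ ↥G₂.verts) where
  Adj a b :=
    match a, b with
    | Sum.inl u, Sum.inl v => G₁.Adj u v
    | Sum.inr u, Sum.inr v => G₂.Adj u v
    | Sum.inl u, Sum.inr v => (u : V) = (v : V)
    | Sum.inr u, Sum.inl v => (u : V) = (v : V)
  symm := by
    constructor
    rintro (u | u) (v | v) h
    · exact G₁.adj_symm h
    · exact h.symm
    · exact h.symm
    · exact G₂.adj_symm h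
  loopless := by
    constructor
    rintro (u | u) h
    · exact G.loopless.irrefl _ (G₁.adj_sub h)
    · exact G.loopless.irrefl _ (G₂.adj_sub h)

/-- `H` is the expansion of `G` with respect to the subgraphs `G₁` and `G₂`:
they are isometric, cover `G` (vertices and edges), have non-empty
intersection, and `H` is isomorphic to the resulting expansion graph. -/
structure IsExpansionWrt {V W : Type} (H : SimpleGraph W) (G : SimpleGraph V)
    (G₁ G₂ : G.Subgraph) : Prop where
  isometric₁ : IsIsometricSubgraph G₁
  isometric₂ : IsIsometricSubgraph G₂
  covers : G₁ ⊔ G₂ = ⊤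
  inter_nonempty : (G₁.verts ∩ G₂.verts).Nonempty
  iso : Nonempty (H ≃g expansionGraph G₁ G₂)

/-- `H` is an expansion of `G` (with respect to some admissible pair of
subgraphs). -/
def IsExpansionOf {V W : Type} (H : SimpleGraph W) (G : SimpleGraph V) : Prop :=
  ∃ G₁ G₂ : G.Subgraph, IsExpansionWrt H G G₁ G₂

/-- The Djoković–Winkler relation `Θ` on (unordered) edges: `e = xy` and
`f = uv` are related iff `d(x,u) + d(y,v) ≠ d(x,v) + d(y,u)`. -/
def DWRel {V : Type} (G : SimpleGraph V) (e f : Sym2 V) : Prop :=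
  ∃ x y u v : V, e = s(x, y) ∧ f = s(u, v) ∧
    G.dist x u + G.dist y v ≠ G.dist x v + G.dist y u

/-- A `Θ`-class of `G`: the set of all edges of `G` related to some fixed edge
`e` of `G` by the Djoković–Winkler relation. -/
def IsThetaClass {V : Type} (G : SimpleGraph V) (C : Set (Sym2 V)) : Prop :=
  ∃ e ∈ G.edgeSet, C = {f | f ∈ G.edgeSet ∧ DWRel G e f}

/-- Graphs obtainable from the one-vertex graph `K₁` by a sequence of exactly
`n` expansions. -/
inductive ObtainableByExpansionsIn : ∀ {V : Type}, SimpleGraph V → ℕ → Prop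
  | single {V : Type} (G : SimpleGraph V) (h : ∃ v : V, ∀ w : V, w = v) :
      ObtainableByExpansionsIn G 0
  | expand {V W : Type} {G : SimpleGraph V} {H : SimpleGraph W} {n : ℕ}
      (hG : ObtainableByExpansionsIn G n) (hH : IsExpansionOf H G) :
      ObtainableByExpansionsIn H (n + 1)

section Hamming

variable {ι : Type*} [Fintype ι]

lemma hammingDist_eq_sum (x y : ι → Bool) :
    hammingDist x y = ∑ c, if x c = y c then 0 else 1 := by
  rw [hammingDist, Finset.card_filter]
  exact Finset.sum_congr rfl fun c _ => by split_ifs <;> simp_all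

lemma hammingDist_cons {d : ℕ} (s t : Bool) (x y : Fin d → Bool) :
    hammingDist (Fin.cons s x : Fin (d + 1) → Bool) (Fin.cons t y) =
      (if s = t then 0 else 1) + hammingDist x y := by
  simp [hammingDist_eq_sum, Fin.sum_univ_succ]

lemma exists_ne_of_hammingDist_eq_one {x y : ι → Bool} (h : hammingDist x y = 1) :
    ∃ i, x i ≠ y i ∧ ∀ j ≠ i, x j = y j := by
  obtain ⟨i, hi⟩ := Finset.card_eq_one.mp h
  have hmem (j : ι) : x j ≠ y j ↔ j = i := by
    simpa using Finset.ext_iff.mp hi j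
  exact ⟨i, (hmem i).mpr rfl, fun j hj => not_not.mp fun hne => hj ((hmem j).mp hne)⟩

/-- Only coordinate `i` contributes to the difference of the two sides. -/
lemma hammingDist_add_eq_iff {x y u v : ι → Bool} {i : ι} (hi : x i ≠ y i)
    (hxy : ∀ j ≠ i, x j = y j) :
    hammingDist x u + hammingDist y v = hammingDist x v + hammingDist y u ↔ u i = v i := by
  let δ (a b : Bool) : ℤ := if a = b then 0 else 1
  have hsum : ((hammingDist x u + hammingDist y v : ℕ) : ℤ) -
      (hammingDist x v + hammingDist y u : ℕ) =
      ∑ c, (δ (x c) (u c) + δ (y c) (v c) - δ (x c) (v c) - δ (y c) (u c)) := by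
    simp only [hammingDist_eq_sum, Nat.cast_add, Nat.cast_sum, Nat.cast_ite, CharP.cast_eq_zero,
      Nat.cast_one, Finset.sum_sub_distrib, Finset.sum_add_distrib, δ]
    ring
  rw [Finset.sum_eq_single i (fun j _ hj => by simp [hxy j hj]) (by simp)] at hsum
  rw [← Int.natCast_inj, ← sub_eq_zero, hsum]
  revert hi
  cases x i <;> cases y i <;> cases u i <;> cases v i <;> decide

end Hamming

section Cuts

variable {V ι : Type*}

def cutAt (φ : V → ι → Bool) (c : ι) : Set (Sym2 V) :=
  {e | ¬ (e.map (φ · c)).IsDiag}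

@[simp]
lemma mk_mem_cutAt {φ : V → ι → Bool} {c : ι} {x y : V} :
    s(x, y) ∈ cutAt φ c ↔ φ x c ≠ φ y c := by
  simp [cutAt]

def activeCoords (G : SimpleGraph V) (φ : V → ι → Bool) : Set ι :=
  {c | (G.edgeSet ∩ cutAt φ c).Nonempty}

def IsHammingIsometry [Fintype ι] (G : SimpleGraph V) (φ : V → ι → Bool) : Prop :=
  ∀ v w, hammingDist (φ v) (φ w) = G.dist v w

end Cuts

namespace IsHammingIsometry

variable {V : Type} {ι : Type*} [Fintype ι] {G : SimpleGraph V} {φ : V → ι → Bool}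

lemma exists_ne_of_adj (hφ : IsHammingIsometry G φ) {x y : V} (hxy : G.Adj x y) :
    ∃ i, φ x i ≠ φ y i ∧ ∀ j ≠ i, φ x j = φ y j :=
  exists_ne_of_hammingDist_eq_one ((hφ x y).trans (dist_eq_one_iff_adj.mpr hxy))

lemma existsUnique_mem_cutAt (hφ : IsHammingIsometry G φ) {e : Sym2 V} (he : e ∈ G.edgeSet) :
    ∃! i, e ∈ cutAt φ i := by
  induction e with
  | _ x y =>
    obtain ⟨i, hi, hxy⟩ := hφ.exists_ne_of_adj he
    exact ⟨i, mk_mem_cutAt.mpr hi,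
      fun j hj => not_not.mp fun hji => mk_mem_cutAt.mp hj (hxy j hji)⟩

lemma dwRel_iff (hφ : IsHammingIsometry G φ) {e : Sym2 V} (he : e ∈ G.edgeSet) {i : ι}
    (hi : e ∈ cutAt φ i) (f : Sym2 V) : DWRel G e f ↔ f ∈ cutAt φ i := by
  obtain ⟨i', -, hunique⟩ := hφ.existsUnique_mem_cutAt he
  have key : ∀ x y u v, e = s(x, y) →
      (G.dist x u + G.dist y v ≠ G.dist x v + G.dist y u ↔ φ u i ≠ φ v i) := by
    intro x y u v rfl
    have hxy : ∀ j ≠ i, φ x j = φ y j := fun j hj =>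
      not_not.mp fun hne => hj ((hunique j (mk_mem_cutAt.mpr hne)).trans (hunique i hi).symm)
    rw [← hφ x u, ← hφ y v, ← hφ x v, ← hφ y u, ne_eq, ne_eq,
      hammingDist_add_eq_iff (mk_mem_cutAt.mp hi) hxy]
  constructor
  · rintro ⟨x, y, u, v, rfl, rfl, hne⟩
    exact mk_mem_cutAt.mpr ((key x y u v rfl).mp hne)
  · induction e, f using Sym2.inductionOn₂ with
    | _ x y u v =>
      exact fun hf => ⟨x, y, u, v, rfl, rfl, (key x y u v rfl).mpr (mk_mem_cutAt.mp hf)⟩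

lemma card_thetaClasses (hφ : IsHammingIsometry G φ) :
    Nat.card {C : Set (Sym2 V) // IsThetaClass G C} = (activeCoords G φ).ncard := by
  have hclasses :
      {C | IsThetaClass G C} = (fun i => G.edgeSet ∩ cutAt φ i) '' activeCoords G φ := by
    ext C
    constructor
    · rintro ⟨e, he, rfl⟩
      obtain ⟨i, hi, -⟩ := hφ.existsUnique_mem_cutAt he
      refine ⟨i, ⟨e, he, hi⟩, ?_⟩
      ext f
      simp [hφ.dwRel_iff he hi]
    · rintro ⟨i, ⟨e, he, hi⟩, rfl⟩
      refine ⟨e, he, ?_⟩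
      ext f
      simp [hφ.dwRel_iff he hi]
  have hinj : Set.InjOn (fun i => G.edgeSet ∩ cutAt φ i) (activeCoords G φ) := by
    rintro i ⟨e, he, hi⟩ j - hij
    obtain ⟨k, -, hunique⟩ := hφ.existsUnique_mem_cutAt he
    have hj : e ∈ G.edgeSet ∩ cutAt φ j := Set.ext_iff.mp hij e |>.mp ⟨he, hi⟩
    exact (hunique i hi).trans (hunique j hj.2).symm
  rw [← hinj.ncard_image, ← hclasses]
  exact Nat.card_coe_set_eq _

end IsHammingIsometry

section HammingIsometry

variable {W W' : Type} {ι : Type*} {X : SimpleGraph W} {Y : SimpleGraph W'}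

lemma hammingDist_le_length [Fintype ι] {ψ : W → ι → Bool}
    (hadj : ∀ a b, X.Adj a b → hammingDist (ψ a) (ψ b) ≤ 1) {a b : W} (p : X.Walk a b) :
    hammingDist (ψ a) (ψ b) ≤ p.length := by
  induction p with
  | nil => simp
  | @cons a c b hac p ih =>
    have := hammingDist_triangle (ψ a) (ψ c) (ψ b)
    have := hadj a c hac
    rw [Walk.length_cons]
    omega

lemma isHammingIsometry_of_forall_exists_walk [Fintype ι] {ψ : W → ι → Bool}
    (hadj : ∀ a b, X.Adj a b → hammingDist (ψ a) (ψ b) ≤ 1)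
    (hwalk : ∀ a b, ∃ p : X.Walk a b, p.length ≤ hammingDist (ψ a) (ψ b)) :
    IsHammingIsometry X ψ := by
  intro a b
  obtain ⟨p, hp⟩ := hwalk a b
  obtain ⟨q, hq⟩ := p.reachable.exists_walk_length_eq_dist
  exact le_antisymm (hq ▸ hammingDist_le_length hadj q) ((dist_le p).trans hp)

lemma SimpleGraph.dist_map_le (f : X →g Y) {a b : W} (h : X.Reachable a b) :
    Y.dist (f a) (f b) ≤ X.dist a b := by
  obtain ⟨p, hp⟩ := h.exists_walk_length_eq_dist
  simpa [hp] using dist_le (p.map f)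

lemma SimpleGraph.Iso.dist_eq (f : X ≃g Y) (a b : W) : Y.dist (f a) (f b) = X.dist a b := by
  by_cases h : X.Reachable a b
  · exact le_antisymm (dist_map_le f.toHom h)
      (by simpa using dist_map_le f.symm.toHom (h.map f.toHom))
  · rw [dist_eq_zero_of_not_reachable h,
      dist_eq_zero_of_not_reachable (by rwa [Iso.reachable_iff])]

lemma IsHammingIsometry.comp_iso [Fintype ι] {ψ : W' → ι → Bool} (hψ : IsHammingIsometry Y ψ)
    (f : X ≃g Y) :
    IsHammingIsometry X (ψ ∘ f) :=
  fun a b => (hψ (f a) (f b)).trans (Iso.dist_eq f a b)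

lemma activeCoords_comp_hom_subset (ψ : W' → ι → Bool) (f : X →g Y) :
    activeCoords X (ψ ∘ f) ⊆ activeCoords Y ψ := by
  rintro c ⟨e, he, hc⟩
  refine ⟨e.map f, f.map_mem_edgeSet he, ?_⟩
  simpa [cutAt, Sym2.map_map] using hc

lemma activeCoords_comp_iso (ψ : W' → ι → Bool) (f : X ≃g Y) :
    activeCoords X (ψ ∘ f) = activeCoords Y ψ := by
  refine (activeCoords_comp_hom_subset ψ f.toHom).antisymm ?_
  simpa [Function.comp_assoc] using activeCoords_comp_hom_subset (ψ ∘ f) f.symm.toHom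

end HammingIsometry

lemma IsIsometricSubgraph.exists_walk_length_eq {V : Type} {G : SimpleGraph V}
    {G' : G.Subgraph} (hG' : IsIsometricSubgraph G') (hG : G.Connected) (u v : G'.verts) :
    ∃ p : G'.coe.Walk u v, p.length = G.dist u v := by
  rcases eq_or_ne u v with rfl | hne
  · exact ⟨.nil, by simp⟩
  · have hpos : G'.coe.dist u v ≠ 0 := by
      rw [hG' u v]
      exact (hG.pos_dist_of_ne (Subtype.val_injective.ne hne)).ne'
    obtain ⟨p, hp⟩ := (Reachable.of_dist_ne_zero hpos).exists_walk_length_eq_dist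
    exact ⟨p, hp.trans (hG' u v)⟩

section Expansion

variable {V : Type} {G : SimpleGraph V} {G₁ G₂ : G.Subgraph}

lemma adj_or_adj_of_sup_eq_top (hcov : G₁ ⊔ G₂ = ⊤) {x y : V} (h : G.Adj x y) :
    G₁.Adj x y ∨ G₂.Adj x y := by
  rw [← Subgraph.sup_adj, hcov]
  exact h

lemma exists_mem_inter_dist_add_dist_le (hG : G.Connected) (hcov : G₁ ⊔ G₂ = ⊤) {a b : V}
    (q : G.Walk a b) (ha : a ∈ G₁.verts) (hb : b ∈ G₂.verts) :
    ∃ w ∈ G₁.verts ∩ G₂.verts, G.dist a w + G.dist w b ≤ q.length := by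
  induction q with
  | nil => exact ⟨_, ⟨ha, hb⟩, by simp⟩
  | @cons a c b hac p ih =>
    rcases adj_or_adj_of_sup_eq_top hcov hac with h₁ | h₂
    · obtain ⟨w, hw, hle⟩ := ih h₁.snd_mem hb
      have := hG.dist_triangle (u := a) (v := c) (w := w)
      rw [dist_eq_one_iff_adj.mpr hac] at this
      exact ⟨w, hw, by rw [Walk.length_cons]; omega⟩
    · exact ⟨a, ⟨ha, h₂.fst_mem⟩, by simpa using dist_le (.cons hac p)⟩

variable (G₁ G₂) in
def expansionProj : ↥G₁.verts ⊕ ↥G₂.verts → V :=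
  Sum.elim Subtype.val Subtype.val

lemma expansionGraph_adj_cases {a b : ↥G₁.verts ⊕ ↥G₂.verts}
    (h : (expansionGraph G₁ G₂).Adj a b) :
    a.isRight = b.isRight ∧ G.Adj (expansionProj G₁ G₂ a) (expansionProj G₁ G₂ b) ∨
      a.isRight ≠ b.isRight ∧ expansionProj G₁ G₂ a = expansionProj G₁ G₂ b := by
  rcases a with u | u <;> rcases b with v | v
  · exact Or.inl ⟨rfl, G₁.adj_sub h⟩
  · exact Or.inr ⟨by simp, h⟩
  · exact Or.inr ⟨by simp, h⟩
  · exact Or.inl ⟨rfl, G₂.adj_sub h⟩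

lemma exists_expansionGraph_adj (hcov : G₁ ⊔ G₂ = ⊤) {x y : V} (h : G.Adj x y) :
    ∃ a b, (expansionGraph G₁ G₂).Adj a b ∧
      expansionProj G₁ G₂ a = x ∧ expansionProj G₁ G₂ b = y := by
  rcases adj_or_adj_of_sup_eq_top hcov h with h₁ | h₂
  · exact ⟨.inl ⟨x, h₁.fst_mem⟩, .inl ⟨y, h₁.snd_mem⟩, h₁, rfl, rfl⟩
  · exact ⟨.inr ⟨x, h₂.fst_mem⟩, .inr ⟨y, h₂.snd_mem⟩, h₂, rfl, rfl⟩

lemma exists_expansionGraph_walk_inl (hG : G.Connected) (h₁ : IsIsometricSubgraph G₁)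
    (u v : G₁.verts) :
    ∃ p : (expansionGraph G₁ G₂).Walk (.inl u) (.inl v), p.length = G.dist u v := by
  obtain ⟨p, hp⟩ := h₁.exists_walk_length_eq hG u v
  exact ⟨p.map ⟨Sum.inl, id⟩, by simpa using hp⟩

lemma exists_expansionGraph_walk_inr (hG : G.Connected) (h₂ : IsIsometricSubgraph G₂)
    (u v : G₂.verts) :
    ∃ p : (expansionGraph G₁ G₂).Walk (.inr u) (.inr v), p.length = G.dist u v := by
  obtain ⟨p, hp⟩ := h₂.exists_walk_length_eq hG u v
  exact ⟨p.map ⟨Sum.inr, id⟩, by simpa using hp⟩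

lemma exists_expansionGraph_walk_inl_inr (hG : G.Connected) (h₁ : IsIsometricSubgraph G₁)
    (h₂ : IsIsometricSubgraph G₂) (hcov : G₁ ⊔ G₂ = ⊤) (u : G₁.verts) (v : G₂.verts) :
    ∃ p : (expansionGraph G₁ G₂).Walk (.inl u) (.inr v), p.length ≤ G.dist u v + 1 := by
  obtain ⟨q, hq⟩ := hG.exists_walk_length_eq_dist u v
  obtain ⟨w, ⟨hw₁, hw₂⟩, hle⟩ := exists_mem_inter_dist_add_dist_le hG hcov q u.2 v.2
  obtain ⟨p₁, hp₁⟩ := exists_expansionGraph_walk_inl (G₂ := G₂) hG h₁ u ⟨w, hw₁⟩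
  obtain ⟨p₂, hp₂⟩ := exists_expansionGraph_walk_inr (G₁ := G₁) hG h₂ ⟨w, hw₂⟩ v
  have hcross : (expansionGraph G₁ G₂).Adj (.inl ⟨w, hw₁⟩) (.inr ⟨w, hw₂⟩) := rfl
  refine ⟨p₁.append (.cons hcross p₂), ?_⟩
  simp only [Walk.length_append, Walk.length_cons, hp₁, hp₂]
  omega

variable {d : ℕ} {φ : V → Fin d → Bool}

variable (G₁ G₂ φ) in
def expansionCoords : ↥G₁.verts ⊕ ↥G₂.verts → Fin (d + 1) → Bool :=
  fun a => Fin.cons a.isRight (φ (expansionProj G₁ G₂ a))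

lemma hammingDist_expansionCoords (hφ : IsHammingIsometry G φ)
    (a b : ↥G₁.verts ⊕ ↥G₂.verts) :
    hammingDist (expansionCoords G₁ G₂ φ a) (expansionCoords G₁ G₂ φ b) =
      (if a.isRight = b.isRight then 0 else 1) +
        G.dist (expansionProj G₁ G₂ a) (expansionProj G₁ G₂ b) := by
  rw [expansionCoords, expansionCoords, hammingDist_cons, hφ]

lemma hammingDist_expansionCoords_of_adj (hφ : IsHammingIsometry G φ)
    {a b : ↥G₁.verts ⊕ ↥G₂.verts} (h : (expansionGraph G₁ G₂).Adj a b) :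
    hammingDist (expansionCoords G₁ G₂ φ a) (expansionCoords G₁ G₂ φ b) = 1 := by
  rw [hammingDist_expansionCoords hφ]
  rcases expansionGraph_adj_cases h with ⟨hside, hadj⟩ | ⟨hside, hproj⟩
  · simp [hside, dist_eq_one_iff_adj.mpr hadj]
  · simp [hside, hproj]

lemma exists_expansionGraph_walk_length_le (hφ : IsHammingIsometry G φ) (hG : G.Connected)
    (h₁ : IsIsometricSubgraph G₁) (h₂ : IsIsometricSubgraph G₂) (hcov : G₁ ⊔ G₂ = ⊤)
    (a b : ↥G₁.verts ⊕ ↥G₂.verts) :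
    ∃ p : (expansionGraph G₁ G₂).Walk a b,
      p.length ≤ hammingDist (expansionCoords G₁ G₂ φ a) (expansionCoords G₁ G₂ φ b) := by
  rw [hammingDist_expansionCoords hφ]
  rcases a with u | u <;> rcases b with v | v
  · obtain ⟨p, hp⟩ := exists_expansionGraph_walk_inl hG h₁ u v
    exact ⟨p, by simp [hp, expansionProj]⟩
  · obtain ⟨p, hp⟩ := exists_expansionGraph_walk_inl_inr hG h₁ h₂ hcov u v
    exact ⟨p, by simpa [expansionProj, add_comm] using hp⟩
  · obtain ⟨p, hp⟩ := exists_expansionGraph_walk_inl_inr hG h₁ h₂ hcov v u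
    exact ⟨p.reverse, by simpa [expansionProj, add_comm, dist_comm] using hp⟩
  · obtain ⟨p, hp⟩ := exists_expansionGraph_walk_inr hG h₂ u v
    exact ⟨p, by simp [hp, expansionProj]⟩

lemma expansionGraph_connected (hG : G.Connected) (h₁ : IsIsometricSubgraph G₁)
    (h₂ : IsIsometricSubgraph G₂) (hcov : G₁ ⊔ G₂ = ⊤)
    (hne : (G₁.verts ∩ G₂.verts).Nonempty) :
    (expansionGraph G₁ G₂).Connected := by
  obtain ⟨w, hw₁, -⟩ := hne
  have hreach : ∀ a, (expansionGraph G₁ G₂).Reachable (.inl ⟨w, hw₁⟩) a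
    | .inl u => (exists_expansionGraph_walk_inl hG h₁ _ u).elim fun p _ => p.reachable
    | .inr v =>
      (exists_expansionGraph_walk_inl_inr hG h₁ h₂ hcov _ v).elim fun p _ => p.reachable
  have : Nonempty (↥G₁.verts ⊕ ↥G₂.verts) := ⟨.inl ⟨w, hw₁⟩⟩
  exact ⟨fun a b => (hreach a).symm.trans (hreach b)⟩

lemma IsHammingIsometry.expansionCoords (hφ : IsHammingIsometry G φ) (hG : G.Connected)
    (h₁ : IsIsometricSubgraph G₁) (h₂ : IsIsometricSubgraph G₂) (hcov : G₁ ⊔ G₂ = ⊤) :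
    IsHammingIsometry (expansionGraph G₁ G₂) (expansionCoords G₁ G₂ φ) :=
  isHammingIsometry_of_forall_exists_walk
    (fun _ _ h => (hammingDist_expansionCoords_of_adj hφ h).le)
    (exists_expansionGraph_walk_length_le hφ hG h₁ h₂ hcov)

lemma cutAt_expansionCoords_succ (c : Fin d) :
    cutAt (expansionCoords G₁ G₂ φ) c.succ =
      Sym2.map (expansionProj G₁ G₂) ⁻¹' cutAt φ c := by
  ext e
  simp [cutAt, Sym2.map_map, expansionCoords]

/-- The matching edges are cut exactly by the new coordinate `0`, every other edge of the
expansion by the coordinate that cuts its image in `G`. -/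
lemma activeCoords_expansionCoords (hcov : G₁ ⊔ G₂ = ⊤)
    (hne : (G₁.verts ∩ G₂.verts).Nonempty) :
    activeCoords (expansionGraph G₁ G₂) (expansionCoords G₁ G₂ φ) =
      insert 0 (Fin.succ '' activeCoords G φ) := by
  ext c
  induction c using Fin.cases with
  | zero =>
    obtain ⟨w, hw₁, hw₂⟩ := hne
    simp only [Set.mem_insert_iff, true_or, iff_true]
    exact ⟨s(.inl ⟨w, hw₁⟩, .inr ⟨w, hw₂⟩), rfl, by simp [expansionCoords]⟩
  | succ c =>
    simp only [Set.mem_insert_iff, Fin.succ_ne_zero, false_or,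
      (Fin.succ_injective d).mem_set_image, activeCoords, Set.mem_ofPred_eq,
      cutAt_expansionCoords_succ]
    constructor
    · rintro ⟨e, he, hc⟩
      induction e with
      | _ a b =>
        simp only [Set.mem_preimage, Sym2.map_mk, mk_mem_cutAt] at hc
        rcases expansionGraph_adj_cases he with ⟨-, hadj⟩ | ⟨-, hproj⟩
        · exact ⟨_, hadj, mk_mem_cutAt.mpr hc⟩
        · exact absurd (congrArg (φ · c) hproj) hc
    · rintro ⟨e, he, hc⟩
      induction e with
      | _ x y =>
        obtain ⟨a, b, hab, rfl, rfl⟩ := exists_expansionGraph_adj hcov he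
        exact ⟨s(a, b), hab, by simpa using hc⟩

lemma ncard_activeCoords_expansionCoords (hcov : G₁ ⊔ G₂ = ⊤)
    (hne : (G₁.verts ∩ G₂.verts).Nonempty) :
    (activeCoords (expansionGraph G₁ G₂) (expansionCoords G₁ G₂ φ)).ncard =
      (activeCoords G φ).ncard + 1 := by
  rw [activeCoords_expansionCoords hcov hne,
    Set.ncard_insert_of_notMem (by simp [Fin.succ_ne_zero]),
    Set.ncard_image_of_injective _ (Fin.succ_injective d)]

end Expansion

lemma IsExpansionOf.exists_isHammingIsometry {V W : Type} {G : SimpleGraph V}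
    {H : SimpleGraph W} (hexp : IsExpansionOf H G) (hG : G.Connected) {d : ℕ}
    {φ : V → Fin d → Bool} (hφ : IsHammingIsometry G φ) :
    H.Connected ∧ ∃ ψ : W → Fin (d + 1) → Bool,
      IsHammingIsometry H ψ ∧ (activeCoords H ψ).ncard = (activeCoords G φ).ncard + 1 := by
  obtain ⟨G₁, G₂, h₁, h₂, hcov, hne, ⟨f⟩⟩ := hexp
  refine ⟨f.connected_iff.mpr (expansionGraph_connected hG h₁ h₂ hcov hne),
    expansionCoords G₁ G₂ φ ∘ f, (hφ.expansionCoords hG h₁ h₂ hcov).comp_iso f, ?_⟩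
  rw [activeCoords_comp_iso, ncard_activeCoords_expansionCoords hcov hne]

lemma ObtainableByExpansionsIn.exists_isHammingIsometry {V : Type} {G : SimpleGraph V}
    {n : ℕ} (h : ObtainableByExpansionsIn G n) :
    G.Connected ∧ ∃ (d : ℕ) (φ : V → Fin d → Bool),
      IsHammingIsometry G φ ∧ (activeCoords G φ).ncard = n := by
  induction h with
  | single G h =>
    obtain ⟨v, hv⟩ := h
    have : Subsingleton _ := ⟨fun a b => (hv a).trans (hv b).symm⟩
    have : Nonempty _ := ⟨v⟩
    exact ⟨.of_subsingleton, 0, fun _ => Fin.elim0,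
      fun a b => by simp [Subsingleton.elim a b], by simp [Set.eq_empty_of_isEmpty]⟩
  | expand _ hH ih =>
    obtain ⟨hG, d, φ, hφ, rfl⟩ := ih
    obtain ⟨hH', ψ, hψ, hcard⟩ := hH.exists_isHammingIsometry hG hφ
    exact ⟨hH', d + 1, ψ, hψ, hcard⟩

theorem length_of_expansion_sequence_eq_card_thetaClasses_general {V : Type}
    (H : SimpleGraph V) (n : ℕ)
    (hn : ObtainableByExpansionsIn H n) :
    n = Nat.card {C : Set (Sym2 V) // IsThetaClass H C} := by
  obtain ⟨-, d, φ, hφ, rfl⟩ := hn.exists_isHammingIsometry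
  exact hφ.card_thetaClasses.symm

/-- Every sequence of expansions producing a partial cube `H` from the
one-vertex graph `K₁` has the same length, namely the number of `Θ`-classes
of `H`. -/
theorem length_of_expansion_sequence_eq_card_thetaClasses {V : Type}
    (H : SimpleGraph V) (hH : IsPartialCube H) (n : ℕ)
    (hn : ObtainableByExpansionsIn H n) :
    n = Nat.card {C : Set (Sym2 V) // IsThetaClass H C} :=
  length_of_expansion_sequence_eq_card_thetaClasses_general H n hn
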